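/- Let T be a collection of histories and let t ∈ D(T) be a history in the history sDAG (V,E) constructed from T. Then there exist a finite sequence of histories t₁, …, t_n ∈ T and, for each i, a subhistory sᵢ of tᵢ, such that t = t₁ ◁ s₁ ◁ ⋯ ◁ s_n. -/

import Mathlib

universe u v

/-- A node of a history sDAG: either the universal ancestor (UA) node `ρ`,
or a node carrying a label `ℓ : Y` and a subpartition `U : Set (Set Y)`. -/
inductive HNode (Y : Type u) : Type u
  | ua : HNode Y
  | node : Y → Set (Set Y) → HNode Y

namespace HistorySDAGs

variable {Y : Type u}

/-- `U ∈ Part(Y)`: `U` is a set of pairwise disjoint nonempty (finite) clades with `|U| ≠ 1`. -/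
def IsPart (U : Set (Set Y)) : Prop :=
  (∀ C ∈ U, C ≠ ∅) ∧
  (∀ C₁ ∈ U, ∀ C₂ ∈ U, C₁ ≠ C₂ → Disjoint C₁ C₂) ∧
  (∀ C, U ≠ {C}) ∧
  U.Finite ∧ ∀ C ∈ U, C.Finite

open Classical in
/-- The clade union of a node. -/
noncomputable def cladeUnion : HNode Y → Set Y
  | HNode.ua => ∅
  | HNode.node ℓ U => if U = ∅ then {ℓ} else ⋃₀ U

/-- Reachability via directed edges in `E`. -/
def Reach (E : Set (HNode Y × HNode Y)) (a b : HNode Y) : Prop :=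
  Relation.ReflTransGen (fun x y => (x, y) ∈ E) a b

/-- `(V, E)` is a history sDAG on labels `Y`. -/
structure IsHSDAG (V : Set (HNode Y)) (E : Set (HNode Y × HNode Y)) : Prop where
  ua_mem : HNode.ua ∈ V
  valid : ∀ ℓ U, HNode.node ℓ U ∈ V → IsPart U
  edge_mem : ∀ e ∈ E, e.1 ∈ V ∧ e.2 ∈ V
  reach_ua : ∀ v ∈ V, Reach E HNode.ua v
  no_in_ua : ∀ v : HNode Y, (v, HNode.ua) ∉ E
  edge_clade : ∀ ℓ U v, (HNode.node ℓ U, v) ∈ E → cladeUnion v ∈ U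
  clade_cov : ∀ ℓ U, HNode.node ℓ U ∈ V → ∀ C ∈ U,
      ∃ v, (HNode.node ℓ U, v) ∈ E ∧ cladeUnion v = C

/-- Every node-clade pair of `V` has exactly one descendant edge in `E`. -/
def UniqueDesc (V : Set (HNode Y)) (E : Set (HNode Y × HNode Y)) : Prop :=
  ∀ ℓ U, HNode.node ℓ U ∈ V → ∀ C ∈ U,
    ∃! vc, (HNode.node ℓ U, vc) ∈ E ∧ cladeUnion vc = C

/-- `(V, E)` is a history: a history sDAG in which `ρ` has exactly one child and
each node-clade pair has exactly one descendant edge. -/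
def IsHistory (V : Set (HNode Y)) (E : Set (HNode Y × HNode Y)) : Prop :=
  IsHSDAG V E ∧ (∃! v, (HNode.ua, v) ∈ E) ∧ UniqueDesc V E

/-- `(Vs, Es)` is a subhistory of `(V, E)` with root node `vr`. -/
structure IsSubhistoryRooted (V : Set (HNode Y)) (E : Set (HNode Y × HNode Y))
    (Vs : Set (HNode Y)) (Es : Set (HNode Y × HNode Y)) (vr : HNode Y) : Prop where
  subV : Vs ⊆ V
  subE : Es ⊆ E
  ua_not_mem : HNode.ua ∉ Vs
  edge_mem : ∀ e ∈ Es, e.1 ∈ Vs ∧ e.2 ∈ Vs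
  root_mem : vr ∈ Vs
  reach_root : ∀ v ∈ Vs, Reach Es vr v
  unique_desc : ∀ ℓ U, HNode.node ℓ U ∈ Vs → ∀ C ∈ U,
      ∃! vc, (HNode.node ℓ U, vc) ∈ Es ∧ cladeUnion vc = C

/-- `(Vs, Es)` is a subhistory of `(V, E)`. -/
def IsSubhistory (V : Set (HNode Y)) (E : Set (HNode Y × HNode Y))
    (Vs : Set (HNode Y)) (Es : Set (HNode Y × HNode Y)) : Prop :=
  ∃ vr, IsSubhistoryRooted V E Vs Es vr

/-- `(Vt, Et)` is a history in (a trim of) the history sDAG `(V, E)`. -/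
def HistoryIn (V : Set (HNode Y)) (E : Set (HNode Y × HNode Y))
    (Vt : Set (HNode Y)) (Et : Set (HNode Y × HNode Y)) : Prop :=
  Vt ⊆ V ∧ Et ⊆ E ∧ IsHistory Vt Et

/-- The set of labels of leaf nodes in a node set. -/
def leafLabels (Vt : Set (HNode Y)) : Set Y := {ℓ | HNode.node ℓ ∅ ∈ Vt}

/-- A candidate history/graph: a pair of a node set and an edge set. -/
abbrev Hist (Y : Type u) := Set (HNode Y) × Set (HNode Y × HNode Y)

/-- The node set of the history sDAG constructed from the collection `T`. -/
def unionV (T : Set (Hist Y)) : Set (HNode Y) := ⋃ t ∈ T, t.1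

/-- The edge set of the history sDAG constructed from the collection `T`. -/
def unionE (T : Set (Hist Y)) : Set (HNode Y × HNode Y) := ⋃ t ∈ T, t.2

/-- The node set of the complete history sDAG on labels `Y`. -/
def completeV (Y : Type u) : Set (HNode Y) :=
  {v | v = HNode.ua ∨ ∃ ℓ U, v = HNode.node ℓ U ∧ IsPart U}

/-- The edge set of the complete history sDAG on labels `Y`. -/
def completeE (Y : Type u) : Set (HNode Y × HNode Y) :=
  {e | e.1 ∈ completeV Y ∧ e.2 ∈ completeV Y ∧ e.2 ≠ HNode.ua ∧
    (e.1 = HNode.ua ∨ ∃ ℓ U, e.1 = HNode.node ℓ U ∧ cladeUnion e.2 ∈ U)}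

variable {W : Type v}

/-- The weight `g_f` of a subgraph with edge set `Es`: the sum of `f` over all edges. -/
noncomputable def gweight [AddCommMonoid W] (f : HNode Y × HNode Y → W)
    (Es : Set (HNode Y × HNode Y)) : W := ∑ᶠ e ∈ Es, f e

/-- The order is total on the subset `S` of `W`. -/
def TotalOn [PartialOrder W] (S : Set W) : Prop := ∀ a ∈ S, ∀ b ∈ S, a ≤ b ∨ b ≤ a

/-- The order respects addition on the subset `S` of `W`. -/
def RespectsAdd [AddCommMonoid W] [PartialOrder W] (S : Set W) : Prop :=
  ∀ a ∈ S, ∀ b ∈ S, ∀ c : W, a < b ↔ a + c < b + c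

/-- Weights of subhistories of `(V, E)` rooted at `v`. -/
def subWeights [AddCommMonoid W] (f : HNode Y × HNode Y → W)
    (V : Set (HNode Y)) (E : Set (HNode Y × HNode Y)) (v : HNode Y) : Set W :=
  {w | ∃ Vs Es, IsSubhistoryRooted V E Vs Es v ∧ w = gweight f Es}

/-- Weights of augmented subhistories below the node-clade pair `(v, C)`. -/
def augWeights [AddCommMonoid W] (f : HNode Y × HNode Y → W)
    (V : Set (HNode Y)) (E : Set (HNode Y × HNode Y)) (v : HNode Y) (C : Set Y) : Set W :=
  {w | ∃ vc Vs Es, (v, vc) ∈ E ∧ cladeUnion vc = C ∧ IsSubhistoryRooted V E Vs Es vc ∧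
    w = gweight f (insert (v, vc) Es)}

/-- Weights of histories in `(V, E)`. -/
def historyWeights [AddCommMonoid W] (f : HNode Y × HNode Y → W)
    (V : Set (HNode Y)) (E : Set (HNode Y × HNode Y)) : Set W :=
  {w | ∃ Vt Et, HistoryIn V E Vt Et ∧ w = gweight f Et}

/-- `W` is clade-ordered with respect to `f` and `(V, E)`. -/
def CladeOrdered [AddCommMonoid W] [PartialOrder W] (f : HNode Y × HNode Y → W)
    (V : Set (HNode Y)) (E : Set (HNode Y × HNode Y)) : Prop :=
  (∀ v ∈ V, v ≠ HNode.ua →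
      TotalOn (subWeights f V E v) ∧ RespectsAdd (subWeights f V E v)) ∧
  (∀ ℓ U, HNode.node ℓ U ∈ V → ∀ C ∈ U,
      TotalOn (augWeights f V E (HNode.node ℓ U) C) ∧
      RespectsAdd (augWeights f V E (HNode.node ℓ U) C)) ∧
  TotalOn (historyWeights f V E)

/-- The minimum-weight histories in `(V, E)` with respect to `g_f`. -/
def minHistories [AddCommMonoid W] [PartialOrder W] (f : HNode Y × HNode Y → W)
    (V : Set (HNode Y)) (E : Set (HNode Y × HNode Y)) : Set (Hist Y) :=
  {t | HistoryIn V E t.1 t.2 ∧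
    ∀ t' : Hist Y, HistoryIn V E t'.1 t'.2 → gweight f t.2 ≤ gweight f t'.2}

open Classical in
/-- The map `q` collapsing the edge `(vp, vc)`, sending both `vp` and `vc` to `vp'`. -/
noncomputable def collapseMap (vp vc vp' : HNode Y) (v : HNode Y) : HNode Y :=
  if v = vp ∨ v = vc then vp' else v

/-- The history obtained by collapsing the edge `(vp, vc)` (into `vp'`) in `t`. -/
noncomputable def collapseEdgeHist (vp vc vp' : HNode Y) (t : Hist Y) : Hist Y :=
  (collapseMap vp vc vp' '' t.1,
   (fun e : HNode Y × HNode Y => (collapseMap vp vc vp' e.1, collapseMap vp vc vp' e.2)) ''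
     (t.2 \ {(vp, vc)}))

/-- The new parent node `(ℓ_p, (U_p ∪ U_c) \ {CU(v_c)})` formed when collapsing an edge. -/
noncomputable def newParent : HNode Y → HNode Y → HNode Y
  | HNode.node ℓp Up, HNode.node ℓc Uc =>
      HNode.node ℓp ((Up ∪ Uc) \ {cladeUnion (HNode.node ℓc Uc)})
  | v, _ => v

/-- `t'` results from `t` by collapsing one label-collapsible edge. -/
def LabelCollapseStep (t t' : Hist Y) : Prop :=
  ∃ ℓ Up Uc, (HNode.node ℓ Up, HNode.node ℓ Uc) ∈ t.2 ∧ Uc ≠ ∅ ∧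
    t' = collapseEdgeHist (HNode.node ℓ Up) (HNode.node ℓ Uc)
        (newParent (HNode.node ℓ Up) (HNode.node ℓ Uc)) t

/-- `t` is label-collapsed: it has no label-collapsible edge. -/
def LabelCollapsed (t : Hist Y) : Prop :=
  ∀ ℓ Up Uc, (HNode.node ℓ Up, HNode.node ℓ Uc) ∈ t.2 → Uc = ∅

/-- `(vp, vc)` is a label-collapsible edge of `G`. -/
def LabelCollapsibleEdge (G : Hist Y) (vp vc : HNode Y) : Prop :=
  (vp, vc) ∈ G.2 ∧ ∃ ℓ Up Uc, vp = HNode.node ℓ Up ∧ vc = HNode.node ℓ Uc ∧ Uc ≠ ∅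

/-- `T` is a label-collapsible edge cover of `G`. -/
def LabelCollapsibleEdgeCover (G : Hist Y) (T : Set (Hist Y)) : Prop :=
  (∀ t ∈ T, HistoryIn G.1 G.2 t.1 t.2) ∧
  (∀ e ∈ G.2, ∃ t ∈ T, e ∈ t.2) ∧
  (∀ vp vc, LabelCollapsibleEdge G vp vc →
    ∀ Vs Es, IsSubhistory G.1 G.2 Vs Es → (vp, vc) ∈ Es →
      ∃ t ∈ T, Vs ⊆ t.1 ∧ Es ⊆ t.2)

open Classical in
/-- Collapsing the edge `(vp, vc)` in the history sDAG `G`, via `E⁺`, `R`, `E⁻`, `E'`, `V'`. -/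
noncomputable def collapseDAGEdge (vp vc : HNode Y) (G : Hist Y) : Hist Y :=
  let vp' := newParent vp vc
  let Eplus : Set (HNode Y × HNode Y) :=
    (G.2 ∪ {e | ∃ v, e = (v, vp') ∧ (v, vp) ∈ G.2}
        ∪ {e | ∃ v, e = (vp', v) ∧ (vp, v) ∈ G.2 ∧ cladeUnion v ≠ cladeUnion vc}
        ∪ {e | ∃ v, e = (vp', v) ∧ (vc, v) ∈ G.2}) \ {(vp, vc)}
  let R : Set (HNode Y × HNode Y) :=
    if ∃ v, (vp, v) ∈ Eplus ∧ cladeUnion v = cladeUnion vc then ∅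
    else {e ∈ Eplus | e.2 = vp}
  let Eminus := Eplus \ R
  let E' := {e ∈ Eminus | Reach Eminus HNode.ua e.1}
  ({v | ∃ e ∈ E', v = e.1 ∨ v = e.2}, E')

/-- `t'` is obtained from `t` by a subhistory swap, replacing a subhistory of `t` by a
conforming subhistory of some history in `S`. -/
def SwapStepUsing (S : Set (Hist Y)) (t t' : Hist Y) : Prop :=
  ∃ t₂ ∈ S, ∃ Vs' Es' vr' vp,
    IsSubhistoryRooted t₂.1 t₂.2 Vs' Es' vr' ∧ (vp, vr') ∈ t₂.2 ∧
    ∃ Vs Es vr, IsSubhistoryRooted t.1 t.2 Vs Es vr ∧ (vp, vr) ∈ t.2 ∧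
      leafLabels Vs = leafLabels Vs' ∧
      t' = ((t.1 \ Vs) ∪ Vs', (t.2 \ (Es ∪ {(vp, vr)})) ∪ (Es' ∪ {(vp, vr')}))

/-- Leaves of an abstract rooted graph. -/
def IsLeafIn {α : Type v} (nodes : Set α) (edges : Set (α × α)) (x : α) : Prop :=
  x ∈ nodes ∧ ∀ c, (x, c) ∉ edges

/-- Reachability via directed edges in an abstract graph. -/
def GReach {α : Type v} (edges : Set (α × α)) (a b : α) : Prop :=
  Relation.ReflTransGen (fun x y => (x, y) ∈ edges) a b

/-- An (internally) labeled tree: a rooted multifurcating tree with no unifurcations,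
with node labels in `Y` that are injective on leaves. -/
structure IsLabeledTree {α : Type v} (nodes : Set α) (edges : Set (α × α))
    (root : α) (lab : α → Y) : Prop where
  root_mem : root ∈ nodes
  edge_mem : ∀ e ∈ edges, e.1 ∈ nodes ∧ e.2 ∈ nodes
  reach_root : ∀ x ∈ nodes, GReach edges root x
  unique_parent : ∀ x a b, (a, x) ∈ edges → (b, x) ∈ edges → a = b
  no_parent_root : ∀ a, (a, root) ∉ edges
  acyclic : ∀ x, ¬ Relation.TransGen (fun a b => (a, b) ∈ edges) x x
  no_unif : ∀ x ∈ nodes, ¬ (∃! c, (x, c) ∈ edges)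
  leaf_inj : ∀ x y, IsLeafIn nodes edges x → IsLeafIn nodes edges y → lab x = lab y → x = y
  finite : nodes.Finite

/-- The set `C_w` of leaf labels below a node `w` of an abstract labeled tree. -/
def leavesBelow {α : Type v} (nodes : Set α) (edges : Set (α × α)) (lab : α → Y) (w : α) :
    Set Y :=
  {y | ∃ u, IsLeafIn nodes edges u ∧ GReach edges w u ∧ y = lab u}

/-- The history sDAG node `v_w` associated to a node `w` of a labeled tree. -/
def treeNodeOf {α : Type v} (nodes : Set α) (edges : Set (α × α)) (lab : α → Y) (w : α) :
    HNode Y :=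
  HNode.node (lab w) {C | ∃ w', (w, w') ∈ edges ∧ C = leavesBelow nodes edges lab w'}

/-- The node set `V_t` of the history associated to a labeled tree. -/
def treeToHistV {α : Type v} (nodes : Set α) (edges : Set (α × α)) (lab : α → Y) :
    Set (HNode Y) :=
  insert HNode.ua (treeNodeOf nodes edges lab '' nodes)

/-- The edge set `E_t` of the history associated to a labeled tree. -/
def treeToHistE {α : Type v} (nodes : Set α) (edges : Set (α × α)) (root : α) (lab : α → Y) :
    Set (HNode Y × HNode Y) :=
  insert (HNode.ua, treeNodeOf nodes edges lab root)
    {e | ∃ w₁ w₂, (w₁, w₂) ∈ edges ∧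
      e = (treeNodeOf nodes edges lab w₁, treeNodeOf nodes edges lab w₂)}

/-!
Start from a history `t₁ ∈ T` containing the edge of `t` leaving `ρ`. While the current history `c`
of the union sDAG misses an edge of `t`, the first missing edge `(x, w)` on a path from `ρ` leaves
a node `x` of `c`. Swap the subhistory of `c` below the node-clade pair `(x, CU(w))` for the
subhistory below `w` of a history of `T` containing `(x, w)`. This restores `(x, w)` and loses only
edges of `t` whose sources lie below `x`, i.e. have smaller clade unions, so the missing edges,
weighted exponentially in the size of the clade union of their source, lose weight. When nothing is
missing, `c = t`.

That each swap yields a history again rests on one fact: two nodes of a history whose clade unions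
overlap are comparable for reachability. It gives unique parents, and shows that the nodes of `c`
occurring in the inserted subhistory all lay below `x` already.
-/

section Histories

variable {V V' : Set (HNode Y)} {E E' : Set (HNode Y × HNode Y)} {a b x : HNode Y}

def descendants (E : Set (HNode Y × HNode Y)) (x : HNode Y) : Set (HNode Y) :=
  {b | Reach E x b}

def descendantEdges (E : Set (HNode Y × HNode Y)) (x : HNode Y) : Set (HNode Y × HNode Y) :=
  {f | f ∈ E ∧ Reach E x f.1}

theorem cladeUnion_node_of_ne_empty {ℓ : Y} {U : Set (Set Y)} (hU : U ≠ ∅) :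
    cladeUnion (HNode.node ℓ U) = ⋃₀ U := if_neg hU

namespace IsHSDAG

theorem ne_ua_of_mem_edge (hs : IsHSDAG V E) (hab : (a, b) ∈ E) : b ≠ HNode.ua := by
  rintro rfl
  exact hs.no_in_ua a hab

theorem ne_ua_of_reach (hs : IsHSDAG V E) (hr : Reach E a b) (ha : a ≠ HNode.ua) :
    b ≠ HNode.ua := by
  rcases Relation.ReflTransGen.cases_tail hr with rfl | ⟨_, -, hb⟩
  exacts [ha, hs.ne_ua_of_mem_edge hb]

theorem mem_of_reach (hs : IsHSDAG V E) (hr : Reach E a b) (ha : a ∈ V) : b ∈ V := by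
  induction hr with
  | refl => exact ha
  | tail _ hb => exact (hs.edge_mem _ hb).2

theorem cladeUnion_finite (hs : IsHSDAG V E) (hx : x ∈ V) : (cladeUnion x).Finite := by
  cases x with
  | ua => simp [cladeUnion]
  | node ℓ U =>
    obtain ⟨-, -, -, hU, hC⟩ := hs.valid ℓ U hx
    simp only [cladeUnion]
    split_ifs
    exacts [Set.finite_singleton ℓ, hU.sUnion hC]

theorem cladeUnion_nonempty (hs : IsHSDAG V E) (hx : x ∈ V) (hx' : x ≠ HNode.ua) :
    (cladeUnion x).Nonempty := by
  cases x with
  | ua => exact absurd rfl hx'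
  | node ℓ U =>
    simp only [cladeUnion]
    split_ifs with hU
    · exact Set.singleton_nonempty ℓ
    · obtain ⟨C, hC⟩ := Set.nonempty_iff_ne_empty.2 hU
      obtain ⟨y, hy⟩ := Set.nonempty_iff_ne_empty.2 ((hs.valid ℓ U hx).1 C hC)
      exact ⟨y, C, hC, hy⟩

theorem cladeUnion_ssubset (hs : IsHSDAG V E) (ha : a ≠ HNode.ua) (hab : (a, b) ∈ E) :
    cladeUnion b ⊂ cladeUnion a := by
  cases a with
  | ua => exact absurd rfl ha
  | node ℓ U =>
    obtain ⟨hne, hdisj, hnsing, -, -⟩ := hs.valid ℓ U (hs.edge_mem _ hab).1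
    have hb : cladeUnion b ∈ U := hs.edge_clade ℓ U b hab
    have hU : U ≠ ∅ := Set.nonempty_iff_ne_empty.1 ⟨_, hb⟩
    rw [cladeUnion_node_of_ne_empty hU]
    refine Set.ssubset_iff_subset_ne.2 ⟨Set.subset_sUnion_of_mem hb, fun heq => ?_⟩
    -- `|U| ≠ 1` provides a second clade, disjoint from `cladeUnion b`
    obtain ⟨C, hC, hCb⟩ : ∃ C ∈ U, C ≠ cladeUnion b := by
      by_contra! h
      exact hnsing _ (Set.eq_singleton_iff_unique_mem.2 ⟨hb, h⟩)
    obtain ⟨y, hy⟩ := Set.nonempty_iff_ne_empty.2 (hne C hC)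
    exact Set.disjoint_left.1 (hdisj C hC _ hb hCb) hy (heq ▸ ⟨C, hC, hy⟩)

theorem cladeUnion_subset_of_reach (hs : IsHSDAG V E) (hr : Reach E a b)
    (ha : a ≠ HNode.ua) : cladeUnion b ⊆ cladeUnion a := by
  induction hr with
  | refl => exact subset_rfl
  | tail hm hb ih => exact (hs.cladeUnion_ssubset (hs.ne_ua_of_reach hm ha) hb).subset.trans ih

theorem eq_of_reach_of_cladeUnion_subset (hs : IsHSDAG V E) (hr : Reach E a b)
    (ha : a ≠ HNode.ua) (hsub : cladeUnion a ⊆ cladeUnion b) : a = b := by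
  rcases Relation.ReflTransGen.cases_head hr with h | ⟨c, hac, hcb⟩
  · exact h
  · have := hs.cladeUnion_subset_of_reach hcb (hs.ne_ua_of_mem_edge hac)
    exact absurd (hsub.trans this) (hs.cladeUnion_ssubset ha hac).not_subset

theorem not_reach_of_mem_edge (hs : IsHSDAG V E) (ha : a ≠ HNode.ua) (hab : (a, b) ∈ E) :
    ¬ Reach E b a := fun hr =>
  (hs.cladeUnion_ssubset ha hab).ne <| congrArg cladeUnion <|
    hs.eq_of_reach_of_cladeUnion_subset hr (hs.ne_ua_of_mem_edge hab)
      (hs.cladeUnion_ssubset ha hab).subset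

theorem leafLabels_descendants (hs : IsHSDAG V E) (hx : x ∈ V) (hx' : x ≠ HNode.ua) :
    leafLabels (descendants E x) = cladeUnion x := by
  refine Set.Subset.antisymm (fun y hy => hs.cladeUnion_subset_of_reach hy hx' (by
    simp [cladeUnion])) ?_
  induction hn : (cladeUnion x).ncard using Nat.strong_induction_on generalizing x with
  | _ n ih =>
  intro y hy
  cases x with
  | ua => exact absurd rfl hx'
  | node ℓ U =>
    by_cases hU : U = ∅
    · subst hU
      obtain rfl : y = ℓ := by simpa [cladeUnion] using hy
      exact Relation.ReflTransGen.refl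
    · rw [cladeUnion_node_of_ne_empty hU] at hy
      obtain ⟨C, hC, hyC⟩ := hy
      obtain ⟨w, hw, rfl⟩ := hs.clade_cov ℓ U hx C hC
      have hlt := Set.ncard_lt_ncard (hs.cladeUnion_ssubset hx' hw) (hs.cladeUnion_finite hx)
      exact (ih _ (hn ▸ hlt) (hs.edge_mem _ hw).2 (hs.ne_ua_of_mem_edge hw) rfl hyC).head hw

theorem exists_mem_edge_cladeUnion_eq (hs : IsHSDAG V E) (hs' : IsHSDAG V' E') (hx : x ∈ V)
    (hx' : x ≠ HNode.ua) (hxb : (x, b) ∈ E') :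
    ∃ a, (x, a) ∈ E ∧ cladeUnion a = cladeUnion b := by
  cases x with
  | ua => exact absurd rfl hx'
  | node ℓ U => exact hs.clade_cov ℓ U hx _ (hs'.edge_clade ℓ U b hxb)

end IsHSDAG

namespace IsHistory

theorem eq_of_ua_edge (hh : IsHistory V E) (ha : (HNode.ua, a) ∈ E) (hb : (HNode.ua, b) ∈ E) :
    a = b := by
  obtain ⟨r, -, hr⟩ := hh.2.1
  rw [hr a ha, hr b hb]

theorem reach_of_ua_edge (hh : IsHistory V E) {r : HNode Y} (hr : (HNode.ua, r) ∈ E)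
    (hx : x ∈ V) (hx' : x ≠ HNode.ua) : Reach E r x := by
  rcases Relation.ReflTransGen.cases_head (hh.1.reach_ua x hx) with h | ⟨c, hc, hcx⟩
  · exact absurd h.symm hx'
  · rwa [hh.eq_of_ua_edge hr hc]

theorem eq_of_mem_edge_of_not_disjoint (hh : IsHistory V E) (hx : x ≠ HNode.ua)
    (ha : (x, a) ∈ E) (hb : (x, b) ∈ E) (hab : ¬ Disjoint (cladeUnion a) (cladeUnion b)) :
    a = b := by
  cases x with
  | ua => exact absurd rfl hx
  | node ℓ U =>
    have hxV := (hh.1.edge_mem _ ha).1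
    have haU := hh.1.edge_clade ℓ U a ha
    have hCU : cladeUnion a = cladeUnion b := by
      by_contra hne
      exact hab ((hh.1.valid ℓ U hxV).2.1 _ haU _ (hh.1.edge_clade ℓ U b hb) hne)
    obtain ⟨c, -, hc⟩ := hh.2.2 ℓ U hxV _ haU
    rw [hc a ⟨ha, rfl⟩, hc b ⟨hb, hCU.symm⟩]

theorem eq_of_mem_edge_of_cladeUnion_eq (hh : IsHistory V E) (hx : x ≠ HNode.ua)
    (ha : (x, a) ∈ E) (hb : (x, b) ∈ E) (hab : cladeUnion a = cladeUnion b) : a = b := by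
  obtain ⟨y, hy⟩ := hh.1.cladeUnion_nonempty (hh.1.edge_mem _ ha).2 (hh.1.ne_ua_of_mem_edge ha)
  exact hh.eq_of_mem_edge_of_not_disjoint hx ha hb (Set.not_disjoint_iff.2 ⟨y, hy, hab ▸ hy⟩)

theorem reach_or_reach_of_reach (hh : IsHistory V E) (hx : x ≠ HNode.ua) (ha : Reach E x a)
    (hb : Reach E x b) (hab : ¬ Disjoint (cladeUnion a) (cladeUnion b)) :
    Reach E a b ∨ Reach E b a := by
  induction ha using Relation.ReflTransGen.head_induction_on with
  | refl => exact Or.inl hb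
  | @head x c hxc hca ih =>
    rcases Relation.ReflTransGen.cases_head hb with rfl | ⟨d, hxd, hdb⟩
    · exact Or.inr (hca.head hxc)
    · have hc := hh.1.ne_ua_of_mem_edge hxc
      have hcd : c = d := hh.eq_of_mem_edge_of_not_disjoint hx hxc hxd fun hdisj =>
        hab (hdisj.mono (hh.1.cladeUnion_subset_of_reach hca hc)
          (hh.1.cladeUnion_subset_of_reach hdb (hh.1.ne_ua_of_mem_edge hxd)))
      exact ih hc (hcd ▸ hdb)

theorem reach_or_reach (hh : IsHistory V E) (ha : a ∈ V) (ha' : a ≠ HNode.ua) (hb : b ∈ V)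
    (hb' : b ≠ HNode.ua) (hab : ¬ Disjoint (cladeUnion a) (cladeUnion b)) :
    Reach E a b ∨ Reach E b a := by
  obtain ⟨r, hr, -⟩ := hh.2.1
  exact hh.reach_or_reach_of_reach (hh.1.ne_ua_of_mem_edge hr) (hh.reach_of_ua_edge hr ha ha')
    (hh.reach_of_ua_edge hr hb hb') hab

theorem reach_of_cladeUnion_subset (hh : IsHistory V E) (ha : a ∈ V) (ha' : a ≠ HNode.ua)
    (hb : b ∈ V) (hb' : b ≠ HNode.ua) (hsub : cladeUnion b ⊆ cladeUnion a) : Reach E a b := by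
  obtain ⟨y, hy⟩ := hh.1.cladeUnion_nonempty hb hb'
  rcases hh.reach_or_reach ha ha' hb hb' (Set.not_disjoint_iff.2 ⟨y, hsub hy, hy⟩) with h | h
  · exact h
  · obtain rfl := hh.1.eq_of_reach_of_cladeUnion_subset h hb' hsub
    exact Relation.ReflTransGen.refl

theorem cladeUnion_injOn (hh : IsHistory V E) : Set.InjOn cladeUnion (V \ {HNode.ua}) := by
  rintro a ⟨ha, ha'⟩ b ⟨hb, hb'⟩ h
  exact hh.1.eq_of_reach_of_cladeUnion_subset
    (hh.reach_of_cladeUnion_subset ha ha' hb hb' h.ge) ha' h.le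

theorem finite_nodes (hh : IsHistory V E) : V.Finite := by
  obtain ⟨r, hr, -⟩ := hh.2.1
  have himage : cladeUnion '' (V \ {HNode.ua}) ⊆ {C | C ⊆ cladeUnion r} := by
    rintro _ ⟨v, ⟨hv, hv'⟩, rfl⟩
    exact hh.1.cladeUnion_subset_of_reach (hh.reach_of_ua_edge hr hv hv')
      (hh.1.ne_ua_of_mem_edge hr)
  have hfin := (hh.1.cladeUnion_finite (hh.1.edge_mem _ hr).2).finite_subsets.subset himage
  exact (hfin.of_finite_image hh.cladeUnion_injOn).of_sdiff (Set.finite_singleton _)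

theorem finite_edges (hh : IsHistory V E) : E.Finite :=
  (hh.finite_nodes.prod hh.finite_nodes).subset fun e he => hh.1.edge_mem e he

theorem parent_unique (hh : IsHistory V E) {p q : HNode Y} (hp : (p, x) ∈ E)
    (hq : (q, x) ∈ E) : p = q := by
  have hx' := hh.1.ne_ua_of_mem_edge hp
  obtain ⟨y, hy⟩ := hh.1.cladeUnion_nonempty (hh.1.edge_mem _ hp).2 hx'
  have hua : ∀ {q : HNode Y}, (HNode.ua, x) ∈ E → (q, x) ∈ E → q = HNode.ua := by
    intro q hp hq
    by_contra hq'
    exact hh.1.not_reach_of_mem_edge hq' hq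
      (hh.reach_of_ua_edge hp (hh.1.edge_mem _ hq).1 hq')
  -- a path `p → c →* q` would make `c` and `x` sibling children of `p` sharing `y`
  have key : ∀ {p q : HNode Y},
      p ≠ HNode.ua → Reach E p q → (p, x) ∈ E → (q, x) ∈ E → p = q := by
    intro p q hp' hpq hp hq
    rcases Relation.ReflTransGen.cases_head hpq with h | ⟨c, hpc, hcq⟩
    · exact h
    have hq' := hh.1.ne_ua_of_reach hcq (hh.1.ne_ua_of_mem_edge hpc)
    have hyc : y ∈ cladeUnion c := hh.1.cladeUnion_subset_of_reach hcq
      (hh.1.ne_ua_of_mem_edge hpc) ((hh.1.cladeUnion_ssubset hq' hq).subset hy)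
    obtain rfl := hh.eq_of_mem_edge_of_not_disjoint hp' hpc hp
      (Set.not_disjoint_iff.2 ⟨y, hyc, hy⟩)
    exact absurd hcq (hh.1.not_reach_of_mem_edge hq' hq)
  by_cases hp' : p = HNode.ua
  · subst hp'
    exact (hua hp hq).symm
  by_cases hq' : q = HNode.ua
  · subst hq'
    exact hua hq hp
  have hpV := (hh.1.edge_mem _ hp).1
  have hqV := (hh.1.edge_mem _ hq).1
  rcases hh.reach_or_reach hpV hp' hqV hq' (Set.not_disjoint_iff.2
    ⟨y, (hh.1.cladeUnion_ssubset hp' hp).subset hy,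
      (hh.1.cladeUnion_ssubset hq' hq).subset hy⟩) with h | h
  · exact key hp' h hp hq
  · exact (key hq' h hq hp).symm

theorem eq_of_mem_edge_of_mem_descendants (hh : IsHistory V E) {v : HNode Y} (hxv : (x, v) ∈ E)
    (hab : (a, b) ∈ E) (hb : b ∈ descendants E v) (ha : a ∉ descendants E v) :
    (a, b) = (x, v) := by
  rcases Relation.ReflTransGen.cases_tail hb with rfl | ⟨m, hvm, hmb⟩
  · rw [hh.parent_unique hab hxv]
  · exact absurd (hh.parent_unique hab hmb ▸ hvm) ha

theorem isSubhistoryRooted_descendants (hh : IsHistory V E) (hx : x ∈ V) (hx' : x ≠ HNode.ua) :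
    IsSubhistoryRooted V E (descendants E x) (descendantEdges E x) x where
  subV _ hb := hh.1.mem_of_reach hb hx
  subE _ hf := hf.1
  ua_not_mem h := hh.1.ne_ua_of_reach h hx' rfl
  edge_mem f hf := ⟨hf.2, hf.2.tail hf.1⟩
  root_mem := Relation.ReflTransGen.refl
  reach_root v hv := by
    induction hv with
    | refl => exact Relation.ReflTransGen.refl
    | tail hm hb ih => exact ih.tail ⟨hb, hm⟩
  unique_desc ℓ U hmem C hC := by
    obtain ⟨c, ⟨hc, hcC⟩, hu⟩ := hh.2.2 ℓ U (hh.1.mem_of_reach hmem hx) C hC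
    exact ⟨c, ⟨⟨hc, hmem⟩, hcC⟩, fun d hd => hu d ⟨hd.1.1, hd.2⟩⟩

theorem eq_of_subset (hh : IsHistory V E) (hh' : IsHistory V' E') (hsub : E' ⊆ E) :
    V = V' ∧ E = E' := by
  have hedge : ∀ f ∈ E, f.1 ∈ V' → f ∈ E' := by
    rintro ⟨a, b⟩ hf ha
    cases a with
    | ua =>
      obtain ⟨r, hr, -⟩ := hh'.2.1
      rwa [hh.eq_of_ua_edge hf (hsub hr)]
    | node ℓ U =>
      obtain ⟨b', ⟨hb', hbb'⟩, -⟩ := hh'.2.2 ℓ U ha _ (hh.1.edge_clade ℓ U b hf)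
      rwa [hh.eq_of_mem_edge_of_cladeUnion_eq (by simp) hf (hsub hb') hbb'.symm]
  have hreach : ∀ v, Reach E HNode.ua v → v ∈ V' := fun v hv => by
    induction hv with
    | refl => exact hh'.1.ua_mem
    | tail _ hb ih => exact (hh'.1.edge_mem _ (hedge _ hb ih)).2
  have hV : V ⊆ V' := fun v hv => hreach v (hh.1.reach_ua v hv)
  have hV' : V' ⊆ V := fun v hv => by
    rcases Relation.ReflTransGen.cases_tail (hh'.1.reach_ua v hv) with rfl | ⟨_, -, hmv⟩
    exacts [hh.1.ua_mem, (hh.1.edge_mem _ (hsub hmv)).2]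
  have hE : E ⊆ E' := fun f hf => hedge f hf (hV (hh.1.edge_mem f hf).1)
  exact ⟨hV.antisymm hV', hE.antisymm hsub⟩

end IsHistory

end Histories

section Swap

variable {S : Set (Hist Y)} {c s : Hist Y} {x v w : HNode Y}

def swapAt (c s : Hist Y) (x v w : HNode Y) : Hist Y :=
  ((c.1 \ descendants c.2 v) ∪ descendants s.2 w,
    (c.2 \ (descendantEdges c.2 v ∪ {(x, v)})) ∪ (descendantEdges s.2 w ∪ {(x, w)}))

theorem mem_swapAt_snd {f : HNode Y × HNode Y} :
    f ∈ (swapAt c s x v w).2 ↔ (f ∈ c.2 ∧ f.1 ∉ descendants c.2 v ∧ f ≠ (x, v)) ∨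
      f ∈ descendantEdges s.2 w ∨ f = (x, w) := by
  simp only [swapAt, descendantEdges, Set.mem_union, Set.mem_sdiff, Set.mem_ofPred_eq,
    Set.mem_singleton_iff, descendants]
  tauto

theorem ua_edge_mem_swapAt {r : HNode Y} (hc : IsHSDAG c.1 c.2) (hx : x ≠ HNode.ua)
    (hxv : (x, v) ∈ c.2) (hr : (HNode.ua, r) ∈ c.2) : (HNode.ua, r) ∈ (swapAt c s x v w).2 :=
  mem_swapAt_snd.2 <| Or.inl ⟨hr, fun h => hc.ne_ua_of_reach h (hc.ne_ua_of_mem_edge hxv) rfl,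
    fun h => hx (congrArg Prod.fst h).symm⟩

theorem reach_swapAt_of_reach {a b : HNode Y} (hr : Reach c.2 a b)
    (hb : b ∉ descendants c.2 v) : Reach (swapAt c s x v w).2 a b := by
  induction hr with
  | refl => exact Relation.ReflTransGen.refl
  | @tail m b _ hmb ih =>
    have hm : m ∉ descendants c.2 v := fun h => hb (Relation.ReflTransGen.tail h hmb)
    refine (ih hm).tail (mem_swapAt_snd.2 (Or.inl ⟨hmb, hm, fun h => hb ?_⟩))
    rw [show b = v from congrArg Prod.snd h]
    exact Relation.ReflTransGen.refl

theorem mem_descendants_of_mem_descendants (hc : IsHistory c.1 c.2) (hs : IsHSDAG s.1 s.2)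
    (hxv : (x, v) ∈ c.2) (hxw : (x, w) ∈ s.2) (hvw : cladeUnion v = cladeUnion w) {y : HNode Y}
    (hy : y ∈ descendants s.2 w) (hyc : y ∈ c.1) : y ∈ descendants c.2 v := by
  have hw := hs.ne_ua_of_mem_edge hxw
  exact hc.reach_of_cladeUnion_subset (hc.1.edge_mem _ hxv).2 (hc.1.ne_ua_of_mem_edge hxv) hyc
    (hs.ne_ua_of_reach hy hw) (hvw ▸ hs.cladeUnion_subset_of_reach hy hw)

theorem mem_swapAt_snd_iff_of_mem_fst (hc : IsHistory c.1 c.2) (hs : IsHSDAG s.1 s.2)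
    (hxv : (x, v) ∈ c.2) (hxw : (x, w) ∈ s.2) (hvw : cladeUnion v = cladeUnion w) {y z : HNode Y}
    (hyc : y ∈ c.1) (hyv : y ∉ descendants c.2 v) :
    (y, z) ∈ (swapAt c s x v w).2 ↔ ((y, z) ∈ c.2 ∧ (y, z) ≠ (x, v)) ∨ (y, z) = (x, w) := by
  rw [mem_swapAt_snd]
  constructor
  · rintro (⟨h, -, h'⟩ | ⟨-, h⟩ | h)
    exacts [Or.inl ⟨h, h'⟩,
      absurd (mem_descendants_of_mem_descendants hc hs hxv hxw hvw h hyc) hyv, Or.inr h]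
  · rintro (⟨h, h'⟩ | h)
    exacts [Or.inl ⟨h, hyv, h'⟩, Or.inr (Or.inr h)]

theorem mem_swapAt_snd_iff_of_mem_descendants (hc : IsHistory c.1 c.2) (hs : IsHSDAG s.1 s.2)
    (hx : x ≠ HNode.ua) (hxv : (x, v) ∈ c.2) (hxw : (x, w) ∈ s.2)
    (hvw : cladeUnion v = cladeUnion w) {y z : HNode Y} (hyw : y ∈ descendants s.2 w) :
    (y, z) ∈ (swapAt c s x v w).2 ↔ (y, z) ∈ s.2 := by
  have hsep : ∀ {y'}, y' ∈ descendants s.2 w → y' ∈ c.1 → y' ∈ descendants c.2 v :=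
    mem_descendants_of_mem_descendants hc hs hxv hxw hvw
  rw [mem_swapAt_snd]
  refine ⟨?_, fun h => Or.inr (Or.inl ⟨h, hyw⟩)⟩
  rintro (⟨h, hv, -⟩ | ⟨h, -⟩ | h)
  · exact absurd (hsep hyw (hc.1.edge_mem _ h).1) hv
  · exact h
  · exact absurd (hsep (congrArg Prod.fst h ▸ hyw) (hc.1.edge_mem _ hxv).1)
      (hc.1.not_reach_of_mem_edge hx hxv)

theorem uniqueDesc_swapAt (hc : IsHistory c.1 c.2) (hs : IsHistory s.1 s.2) (hx : x ≠ HNode.ua)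
    (hxv : (x, v) ∈ c.2) (hxw : (x, w) ∈ s.2) (hvw : cladeUnion v = cladeUnion w) :
    UniqueDesc (swapAt c s x v w).1 (swapAt c s x v w).2 := by
  intro ℓ U hy C hC
  rcases hy with ⟨hyc, hyv⟩ | hyw
  · simp only [mem_swapAt_snd_iff_of_mem_fst hc hs.1 hxv hxw hvw hyc hyv]
    obtain ⟨z, ⟨hz, hzC⟩, hzu⟩ := hc.2.2 ℓ U hyc C hC
    by_cases hnew : HNode.node ℓ U = x ∧ C = cladeUnion w
    · obtain ⟨rfl, rfl⟩ := hnew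
      refine ⟨w, ⟨Or.inr rfl, rfl⟩, fun z' ⟨hz', hz'C⟩ => ?_⟩
      rcases hz' with ⟨hz', hne⟩ | h
      · obtain rfl := hc.eq_of_mem_edge_of_cladeUnion_eq hx hz' hxv (hz'C.trans hvw.symm)
        exact absurd rfl hne
      · exact congrArg Prod.snd h
    · refine ⟨z, ⟨Or.inl ⟨hz, fun h => hnew ⟨congrArg Prod.fst h, ?_⟩⟩, hzC⟩, ?_⟩
      · rw [Prod.mk.injEq] at h
        rw [← hzC, h.2, hvw]
      rintro z' ⟨hz' | h, hz'C⟩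
      · exact hzu z' ⟨hz'.1, hz'C⟩
      · rw [Prod.mk.injEq] at h
        obtain ⟨hyx, rfl⟩ := h
        exact absurd ⟨hyx, hz'C.symm⟩ hnew
  · simp only [mem_swapAt_snd_iff_of_mem_descendants hc hs.1 hx hxv hxw hvw hyw]
    exact hs.2.2 ℓ U (hs.1.mem_of_reach hyw (hs.1.edge_mem _ hxw).2) C hC

theorem reach_ua_swapAt (hc : IsHistory c.1 c.2) (hs : IsHistory s.1 s.2) (hx : x ≠ HNode.ua)
    (hxv : (x, v) ∈ c.2) (hxw : (x, w) ∈ s.2) {y : HNode Y} (hy : y ∈ (swapAt c s x v w).1) :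
    Reach (swapAt c s x v w).2 HNode.ua y := by
  rcases hy with ⟨h, h'⟩ | h
  · exact reach_swapAt_of_reach (hc.1.reach_ua y h) h'
  · have hwy := (hs.isSubhistoryRooted_descendants (hs.1.edge_mem _ hxw).2
      (hs.1.ne_ua_of_mem_edge hxw)).reach_root y h
    have hx' := reach_swapAt_of_reach (s := s) (x := x) (w := w)
      (hc.1.reach_ua x (hc.1.edge_mem _ hxv).1) (hc.1.not_reach_of_mem_edge hx hxv)
    exact (hx'.tail (mem_swapAt_snd.2 (Or.inr (Or.inr rfl)))).trans
      (Relation.ReflTransGen.mono (fun _ _ h => mem_swapAt_snd.2 (Or.inr (Or.inl h))) _ _ hwy)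

theorem isHSDAG_swapAt (hc : IsHistory c.1 c.2) (hs : IsHistory s.1 s.2) (hx : x ≠ HNode.ua)
    (hxv : (x, v) ∈ c.2) (hxw : (x, w) ∈ s.2) (hvw : cladeUnion v = cladeUnion w) :
    IsHSDAG (swapAt c s x v w).1 (swapAt c s x v w).2 where
  ua_mem :=
    Or.inl ⟨hc.1.ua_mem, fun h => hc.1.ne_ua_of_reach h (hc.1.ne_ua_of_mem_edge hxv) rfl⟩
  valid := by
    rintro ℓ U (⟨h, -⟩ | h)
    exacts [hc.1.valid ℓ U h, hs.1.valid ℓ U (hs.1.mem_of_reach h (hs.1.edge_mem _ hxw).2)]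
  edge_mem f hf := by
    rcases mem_swapAt_snd.1 hf with ⟨h, h₁, h₂⟩ | h | rfl
    · exact ⟨Or.inl ⟨(hc.1.edge_mem _ h).1, h₁⟩, Or.inl ⟨(hc.1.edge_mem _ h).2,
        fun h' => h₂ (hc.eq_of_mem_edge_of_mem_descendants hxv h h' h₁)⟩⟩
    · exact ⟨Or.inr h.2, Or.inr (h.2.tail h.1)⟩
    · exact ⟨Or.inl ⟨(hc.1.edge_mem _ hxv).1, hc.1.not_reach_of_mem_edge hx hxv⟩,
        Or.inr Relation.ReflTransGen.refl⟩
  reach_ua _ hy := reach_ua_swapAt hc hs hx hxv hxw hy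
  no_in_ua y hy := by
    rcases mem_swapAt_snd.1 hy with ⟨h, -, -⟩ | h | h
    · exact hc.1.no_in_ua y h
    · exact hs.1.no_in_ua y h.1
    · exact hs.1.ne_ua_of_mem_edge hxw (congrArg Prod.snd h).symm
  edge_clade ℓ U z hz := by
    rcases mem_swapAt_snd.1 hz with ⟨h, -, -⟩ | h | h
    · exact hc.1.edge_clade ℓ U z h
    · exact hs.1.edge_clade ℓ U z h.1
    · rw [Prod.mk.injEq] at h
      obtain ⟨rfl, rfl⟩ := h
      exact hvw ▸ hc.1.edge_clade ℓ U v hxv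
  clade_cov ℓ U h C hC := (uniqueDesc_swapAt hc hs hx hxv hxw hvw ℓ U h C hC).exists

theorem isHistory_swapAt (hc : IsHistory c.1 c.2) (hs : IsHistory s.1 s.2) (hx : x ≠ HNode.ua)
    (hxv : (x, v) ∈ c.2) (hxw : (x, w) ∈ s.2) (hvw : cladeUnion v = cladeUnion w) :
    IsHistory (swapAt c s x v w).1 (swapAt c s x v w).2 := by
  obtain ⟨r, hr, hru⟩ := hc.2.1
  refine ⟨isHSDAG_swapAt hc hs hx hxv hxw hvw, ⟨r, ua_edge_mem_swapAt hc.1 hx hxv hr, ?_⟩,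
    uniqueDesc_swapAt hc hs hx hxv hxw hvw⟩
  intro y hy
  rcases mem_swapAt_snd.1 hy with ⟨h, -, -⟩ | h | h
  · exact hru y h
  · exact absurd rfl (hs.1.ne_ua_of_reach h.2 (hs.1.ne_ua_of_mem_edge hxw))
  · exact absurd (congrArg Prod.fst h).symm hx

theorem swapStepUsing_swapAt (hS : s ∈ S) (hc : IsHistory c.1 c.2) (hs : IsHistory s.1 s.2)
    (hxv : (x, v) ∈ c.2) (hxw : (x, w) ∈ s.2) (hvw : cladeUnion v = cladeUnion w) :
    SwapStepUsing S c (swapAt c s x v w) := by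
  have hv := (hc.1.edge_mem _ hxv).2
  have hw := (hs.1.edge_mem _ hxw).2
  have hv' := hc.1.ne_ua_of_mem_edge hxv
  have hw' := hs.1.ne_ua_of_mem_edge hxw
  refine ⟨s, hS, _, _, w, x, hs.isSubhistoryRooted_descendants hw hw', hxw, _, _, v,
    hc.isSubhistoryRooted_descendants hv hv', hxv, ?_, rfl⟩
  rw [hc.1.leafLabels_descendants hv hv', hs.1.leafLabels_descendants hw hw', hvw]

theorem historyIn_swapAt {V : Set (HNode Y)} {E : Set (HNode Y × HNode Y)}
    (hc : HistoryIn V E c.1 c.2) (hs : HistoryIn V E s.1 s.2) (hxw : (x, w) ∈ s.2)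
    (h : IsHistory (swapAt c s x v w).1 (swapAt c s x v w).2) :
    HistoryIn V E (swapAt c s x v w).1 (swapAt c s x v w).2 := by
  refine ⟨?_, fun f hf => ?_, h⟩
  · rintro y (⟨hy, -⟩ | hy)
    exacts [hc.1 hy, hs.1 (hs.2.2.1.mem_of_reach hy (hs.2.2.1.edge_mem _ hxw).2)]
  · rcases mem_swapAt_snd.1 hf with ⟨hf, -, -⟩ | hf | rfl
    exacts [hc.2.1 hf, hs.2.1 hf.1, hs.2.1 hxw]

end Swap

theorem sum_pow_lt_of_subset_erase_union {α : Type*} [DecidableEq α] {S S' D : Finset α}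
    {r : α → ℕ} {K : ℕ} {e : α} (he : e ∈ S) (hK : D.card < K) (hsub : S' ⊆ S.erase e ∪ D)
    (hr : ∀ d ∈ D, r d < r e) : ∑ f ∈ S', K ^ r f < ∑ f ∈ S, K ^ r f := by
  have hD : ∑ d ∈ D, K ^ r d < K ^ r e := by
    refine Nat.lt_of_mul_lt_mul_right (a := K) ?_
    calc (∑ d ∈ D, K ^ r d) * K = ∑ d ∈ D, K ^ (r d + 1) := by
          simp [Finset.sum_mul, pow_succ]
      _ ≤ ∑ _d ∈ D, K ^ r e :=
        Finset.sum_le_sum fun d hd => Nat.pow_le_pow_right (by omega) (hr d hd)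
      _ = D.card * K ^ r e := by rw [Finset.sum_const, smul_eq_mul]
      _ < K * K ^ r e := Nat.mul_lt_mul_of_pos_right hK (pow_pos (by omega) _)
      _ = K ^ r e * K := mul_comm _ _
  calc ∑ f ∈ S', K ^ r f
      ≤ ∑ f ∈ S.erase e ∪ D, K ^ r f := Finset.sum_le_sum_of_subset hsub
    _ ≤ ∑ f ∈ S.erase e, K ^ r f + ∑ d ∈ D, K ^ r d := by
      rw [← Finset.sum_union_inter]
      exact Nat.le_add_right _ _
    _ < ∑ f ∈ S.erase e, K ^ r f + K ^ r e := by omega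
    _ = ∑ f ∈ S, K ^ r f := Finset.sum_erase_add _ _ he

section MissingWeight

/-- The base `t.2.ncard + 1` exceeds the number of edges of `t`, so restoring one missing edge
outweighs losing any number of edges of `t` whose sources have smaller clade unions. -/
noncomputable def missingWeight (t c : Hist Y) : ℕ :=
  ∑ᶠ f ∈ t.2 \ c.2, (t.2.ncard + 1) ^ (cladeUnion f.1).ncard

variable {c s t : Hist Y} {x v w : HNode Y}

theorem sdiff_swapAt_subset (ht : IsHistory t.1 t.2) (hx : x ≠ HNode.ua) (hxw : (x, w) ∈ t.2)
    (hvw : cladeUnion v = cladeUnion w) :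
    t.2 \ (swapAt c s x v w).2 ⊆
      ((t.2 \ c.2) \ {(x, w)}) ∪ (t.2 ∩ descendantEdges c.2 v) := by
  rintro f ⟨hft, hfc'⟩
  have hfe : f ≠ (x, w) := fun h => hfc' (mem_swapAt_snd.2 (Or.inr (Or.inr h)))
  by_cases hfc : f ∈ c.2
  · refine Or.inr ⟨hft, hfc, ?_⟩
    by_contra hf
    refine hfc' (mem_swapAt_snd.2 (Or.inl ⟨hfc, hf, fun h => hfe ?_⟩))
    subst h
    rw [ht.eq_of_mem_edge_of_cladeUnion_eq hx hft hxw hvw]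
  · exact Or.inl ⟨⟨hft, hfc⟩, hfe⟩

theorem missingWeight_swapAt_lt (ht : IsHistory t.1 t.2) (hc : IsHSDAG c.1 c.2)
    (hx : x ≠ HNode.ua) (hxv : (x, v) ∈ c.2) (hxw : (x, w) ∈ t.2) (hxwc : (x, w) ∉ c.2)
    (hvw : cladeUnion v = cladeUnion w) :
    missingWeight t (swapAt c s x v w) < missingWeight t c := by
  classical
  have hfin := ht.finite_edges
  have hM : (t.2 \ c.2).Finite := hfin.sdiff
  have hM' : (t.2 \ (swapAt c s x v w).2).Finite := hfin.sdiff
  have hD := hfin.inter_of_left (descendantEdges c.2 v)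
  unfold missingWeight
  rw [finsum_mem_eq_finite_toFinset_sum _ hM, finsum_mem_eq_finite_toFinset_sum _ hM']
  refine sum_pow_lt_of_subset_erase_union (D := hD.toFinset) (e := (x, w))
    (hM.mem_toFinset.2 ⟨hxw, hxwc⟩) ?_ (fun f hf => ?_) (fun f hf => ?_)
  · rw [← Set.ncard_eq_toFinset_card _ hD]
    exact Nat.lt_succ_of_le (Set.ncard_le_ncard Set.inter_subset_left hfin)
  · rcases sdiff_swapAt_subset ht hx hxw hvw (hM'.mem_toFinset.1 hf) with ⟨hf, hfe⟩ | hf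
    · exact Finset.mem_union_left _ (Finset.mem_erase.2 ⟨hfe, hM.mem_toFinset.2 hf⟩)
    · exact Finset.mem_union_right _ (hD.mem_toFinset.2 hf)
  · have hf := hD.mem_toFinset.1 hf
    have hsub := hc.cladeUnion_subset_of_reach hf.2.2 (hc.ne_ua_of_mem_edge hxv)
    exact Set.ncard_lt_ncard (hsub.trans_ssubset (hc.cladeUnion_ssubset hx hxv))
      (hc.cladeUnion_finite (hc.edge_mem _ hxv).1)

theorem exists_missing_edge_of_not_subset (ht : IsHistory t.1 t.2) (hc : IsHSDAG c.1 c.2)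
    {r : HNode Y} (hrt : (HNode.ua, r) ∈ t.2) (hrc : (HNode.ua, r) ∈ c.2)
    (hne : ¬ t.2 ⊆ c.2) :
    ∃ x w, (x, w) ∈ t.2 ∧ (x, w) ∉ c.2 ∧ x ∈ c.1 ∧ x ≠ HNode.ua := by
  obtain ⟨⟨a, b⟩, hab, habc⟩ := Set.not_subset.1 hne
  have ha := ht.1.reach_ua a (ht.1.edge_mem _ hab).1
  induction ha generalizing b with
  | refl =>
    rw [ht.eq_of_ua_edge hab hrt] at habc
    exact absurd hrc habc
  | @tail m a _ hma ih =>
    by_cases hmac : (m, a) ∈ c.2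
    · exact ⟨a, b, hab, habc, (hc.edge_mem _ hmac).2, hc.ne_ua_of_mem_edge hmac⟩
    · exact ih a hma hmac

end MissingWeight

section Union

variable {T : Set (Hist Y)} {c t : Hist Y} {r : HNode Y}

theorem historyIn_union_of_mem (hT : ∀ u ∈ T, IsHistory u.1 u.2) (ht : t ∈ T) :
    HistoryIn (unionV T) (unionE T) t.1 t.2 :=
  ⟨fun _ hv => Set.mem_biUnion ht hv, fun _ hf => Set.mem_biUnion ht hf, hT t ht⟩

theorem exists_swapStepUsing_missingWeight_lt (hT : ∀ u ∈ T, IsHistory u.1 u.2)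
    (ht : HistoryIn (unionV T) (unionE T) t.1 t.2) (hc : HistoryIn (unionV T) (unionE T) c.1 c.2)
    (hrt : (HNode.ua, r) ∈ t.2) (hrc : (HNode.ua, r) ∈ c.2) (hne : ¬ t.2 ⊆ c.2) :
    ∃ c', SwapStepUsing T c c' ∧ HistoryIn (unionV T) (unionE T) c'.1 c'.2 ∧
      (HNode.ua, r) ∈ c'.2 ∧ missingWeight t c' < missingWeight t c := by
  obtain ⟨x, w, hxw, hxwc, hxc, hx⟩ :=
    exists_missing_edge_of_not_subset ht.2.2 hc.2.2.1 hrt hrc hne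
  obtain ⟨v, hxv, hvw⟩ := hc.2.2.1.exists_mem_edge_cladeUnion_eq ht.2.2.1 hxc hx hxw
  obtain ⟨s, hsT, hxws⟩ := Set.mem_iUnion₂.1 (ht.2.1 hxw)
  have hs := hT s hsT
  exact ⟨swapAt c s x v w, swapStepUsing_swapAt hsT hc.2.2 hs hxv hxws hvw,
    historyIn_swapAt hc (historyIn_union_of_mem hT hsT) hxws
      (isHistory_swapAt hc.2.2 hs hx hxv hxws hvw),
    ua_edge_mem_swapAt hc.2.2.1 hx hxv hrc,
    missingWeight_swapAt_lt ht.2.2 hc.2.2.1 hx hxv hxw hxwc hvw⟩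

theorem reflTransGen_swapStepUsing (hT : ∀ u ∈ T, IsHistory u.1 u.2)
    (ht : HistoryIn (unionV T) (unionE T) t.1 t.2) (hrt : (HNode.ua, r) ∈ t.2)
    (hc : HistoryIn (unionV T) (unionE T) c.1 c.2) (hrc : (HNode.ua, r) ∈ c.2) :
    Relation.ReflTransGen (SwapStepUsing T) c t := by
  induction hn : missingWeight t c using Nat.strong_induction_on generalizing c with
  | _ n ih =>
  by_cases hsub : t.2 ⊆ c.2
  · obtain ⟨h₁, h₂⟩ := hc.2.2.eq_of_subset ht.2.2 hsub
    obtain rfl : c = t := Prod.ext h₁ h₂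
    exact Relation.ReflTransGen.refl
  · obtain ⟨c', hstep, hc', hrc', hlt⟩ :=
      exists_swapStepUsing_missingWeight_lt hT ht hc hrt hrc hsub
    exact Relation.ReflTransGen.head hstep (ih _ (hn ▸ hlt) hc' hrc' rfl)

end Union

/-- Lemma `whataredaghistories`: every history in the history sDAG
constructed from `T` is obtained from some history of `T` by a finite sequence of
subhistory swaps with subhistories of histories in `T`. -/
theorem dag_history_from_swaps
    (T : Set (Hist Y)) (hT : ∀ u ∈ T, IsHistory u.1 u.2)
    (t : Hist Y) (ht : HistoryIn (unionV T) (unionE T) t.1 t.2) :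
    ∃ t₁ ∈ T, Relation.ReflTransGen (SwapStepUsing T) t₁ t := by
  obtain ⟨r, hr, -⟩ := ht.2.2.2.1
  obtain ⟨t₁, ht₁, hr₁⟩ := Set.mem_iUnion₂.1 (ht.2.1 hr)
  exact ⟨t₁, ht₁,
    reflTransGen_swapStepUsing hT ht hr (historyIn_union_of_mem hT ht₁) hr₁⟩

end HistorySDAGs
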